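/- arXiv:1502.06573 — 5 statements merged into one kernel-verified Lean document; each statement's English description precedes it below -/
import Mathlib

section
/- Let $X$ be a Noetherian topological space, let $\kappa$ be an infinite cardinal such that the set of open subsets of $X$ has cardinality at most $\kappa$, and let $F$ be a presheaf of abelian groups on $X$ such that $|F(U)| \le \kappa$ for every open subset $U \subseteq X$. Then the sheafification $aF$ of $F$ also satisfies $|aF(U)| \le \kappa$ for every open subset $U \subseteq X$. -/
open CategoryTheory TopologicalSpace Cardinal Opposite

/-!
Every section `s` of `aF` over `U` is locally in the image of `F → aF`. Since `U` is compact
(`X` is Noetherian), finitely many such local preimages `(V, t)` cover `U`, and by separation of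
`aF` they determine `s`. So choosing such a finite list of pairs `(V, t)` for each `s` is
injective, and there are at most `κ` such lists.
-/

universe u

namespace TopCat.Presheaf

variable {C : Type*} [Category.{u} C] {FC : C → C → Type*} {CC : C → Type u}
  [∀ X Y, FunLike (FC X Y) (CC X) (CC Y)] [ConcreteCategory C FC]
  {X : TopCat.{u}} {F G : Presheaf C X}

def IsFiniteLocalLift (φ : F ⟶ G) {U : Opens X} (s : ToType (G.obj (op U)))
    (l : List (Σ V : Opens X, ToType (F.obj (op V)))) : Prop :=
  (U : Set X) ⊆ ⋃ p ∈ l, (p.1 : Set X) ∧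
    ∀ p ∈ l, ∃ h : p.1 ≤ U, φ.app (op p.1) p.2 = G.map (homOfLE h).op s

theorem exists_isFiniteLocalLift {φ : F ⟶ G} (hφ : IsLocallySurjective φ) {U : Opens X}
    (hU : IsCompact (U : Set X)) (s : ToType (G.obj (op U))) :
    ∃ l, IsFiniteLocalLift φ s l := by
  have hlocal : ∀ x ∈ U, ∃ (V : Opens X) (h : V ≤ U) (t : ToType (F.obj (op V))),
      x ∈ V ∧ φ.app (op V) t = G.map (homOfLE h).op s := by
    intro x hx
    obtain ⟨V, hVU, ⟨t, ht⟩, hxV⟩ := (isLocallySurjective_iff φ).1 hφ U s x hx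
    exact ⟨V, hVU, t, hxV, ht⟩
  choose V hVU t hxV ht using hlocal
  obtain ⟨cover, hcover⟩ := hU.elim_nhds_subcover' (fun x hx => (V x hx : Set X))
    fun x hx => (V x hx).isOpen.mem_nhds (hxV x hx)
  refine ⟨cover.toList.map fun x : (U : Set X) => ⟨V x x.2, t x x.2⟩, ?_, ?_⟩
  · intro y hy
    obtain ⟨x, hx, hyx⟩ := Set.mem_iUnion₂.1 (hcover hy)
    exact Set.mem_iUnion₂.2 ⟨_, List.mem_map_of_mem (Finset.mem_toList.2 hx), hyx⟩
  · simp only [List.mem_map]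
    rintro _ ⟨x, -, rfl⟩
    exact ⟨hVU x x.2, ht x x.2⟩

variable [Limits.HasLimits C] [(forget C).ReflectsIsomorphisms]
  [Limits.PreservesLimits (forget C)]

theorem eq_of_isFiniteLocalLift (hG : G.IsSheaf) (φ : F ⟶ G) {U : Opens X}
    {s s' : ToType (G.obj (op U))} {l : List (Σ V : Opens X, ToType (F.obj (op V)))}
    (hs : IsFiniteLocalLift φ s l) (hs' : IsFiniteLocalLift φ s' l) : s = s' := by
  have hle (p : {p // p ∈ l}) : p.1.1 ≤ U := (hs.2 p.1 p.2).1
  refine Sheaf.eq_of_locally_eq' ⟨G, hG⟩ (fun p : {p // p ∈ l} => p.1.1) U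
    (fun p => homOfLE (hle p)) ?_ s s' fun p => ?_
  · intro x hx
    obtain ⟨p, hp, hxp⟩ := Set.mem_iUnion₂.1 (hs.1 hx)
    exact Opens.mem_iSup.2 ⟨⟨p, hp⟩, hxp⟩
  · exact (hs.2 p.1 p.2).2.symm.trans (hs'.2 p.1 p.2).2

theorem mk_sections_le_of_isLocallySurjective (hG : G.IsSheaf) {φ : F ⟶ G}
    (hφ : IsLocallySurjective φ) {U : Opens X} (hU : IsCompact (U : Set X)) :
    #(ToType (G.obj (op U))) ≤ #(List (Σ V : Opens X, ToType (F.obj (op V)))) := by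
  choose l hl using exists_isFiniteLocalLift hφ hU
  exact mk_le_of_injective (f := l) fun s s' h =>
    eq_of_isFiniteLocalLift hG φ (hl s) (h.symm ▸ hl s')

end TopCat.Presheaf

theorem Cardinal.mk_list_sigma_le {ι : Type u} {A : ι → Type u} {κ : Cardinal.{u}}
    (hκ : ℵ₀ ≤ κ) (hι : #ι ≤ κ) (hA : ∀ i, #(A i) ≤ κ) : #(List (Σ i, A i)) ≤ κ := by
  have hsigma : #(Σ i, A i) ≤ κ :=
    calc #(Σ i, A i) = sum fun i => #(A i) := mk_sigma A
      _ ≤ sum fun _ : ι => κ := sum_le_sum _ _ hA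
      _ = #ι * κ := sum_const' ι κ
      _ ≤ κ * κ := mul_le_mul_left hι κ
      _ = κ := mul_eq_self hκ
  exact (mk_list_le_max _).trans (max_le hκ hsigma)

/-- Let `X` be a Noetherian topological space, `κ` an infinite
cardinal such that the set of open subsets of `X` has cardinality at most `κ`, and
`F` a presheaf of abelian groups on `X` with `|F(U)| ≤ κ` for every open `U`. Then
the sheafification `aF` of `F` also satisfies `|aF(U)| ≤ κ` for every open `U`. -/
theorem card_sections_sheafify_le (X : TopCat) [NoetherianSpace X]
    (κ : Cardinal) (hκ : Cardinal.aleph0 ≤ κ) (hOp : #(Opens X) ≤ κ)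
    (F : (Opens X)ᵒᵖ ⥤ AddCommGrpCat)
    (hF : ∀ U : Opens X, #(F.obj (op U)) ≤ κ) :
    ∀ U : Opens X,
      #((CategoryTheory.sheafify (Opens.grothendieckTopology X) F).obj (op U)) ≤ κ := by
  intro U
  have hφ : TopCat.Presheaf.IsLocallySurjective (toSheafify (Opens.grothendieckTopology X) F) :=
    Presheaf.isLocallySurjective_toSheafify' _ F
  calc _ ≤ #(List (Σ V : Opens X, F.obj (op V))) :=
        TopCat.Presheaf.mk_sections_le_of_isLocallySurjective
          ((presheafToSheaf _ _).obj F).property hφ (NoetherianSpace.isCompact _)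
    _ ≤ κ := mk_list_sigma_le hκ hOp hF
end

section
/- Let $k$ be a field, let $\kappa$ be an infinite cardinal with $|k| \le \kappa$, and let $X$ be a scheme of finite type over $k$. Let $M$ be a sheaf of $\mathcal{O}_X$-modules such that for every affine open subset $W \subseteq X$ the $\mathcal{O}_X(W)$-module $M(W)$ is finitely generated. Then $|M(U)| \le \kappa$ for every open subset $U$ of $X$. -/
/-!
On an affine open `W`, `Γ(X, W)` is a finitely generated `k`-algebra, hence a quotient of a
polynomial ring in finitely many variables over `k`, so `|Γ(X, W)| ≤ κ`; the finitely generated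
module `M(W)` is a quotient of some `Γ(X, W)ⁿ`, so `|M(W)| ≤ κ` as well. Since `X` is Noetherian,
every open `U` is quasi-compact, hence covered by finitely many affine opens `Wᵢ`, and the sheaf
axiom embeds `M(U)` into the finite product `∏ M(Wᵢ)`.
-/

open CategoryTheory TopologicalSpace AlgebraicGeometry Opposite Cardinal

universe u v

namespace Cardinal

theorem mk_pi_le_of_finite {ι : Type u} [Finite ι] {β : ι → Type v} {κ : Cardinal.{v}}
    (hκ : ℵ₀ ≤ κ) (hβ : ∀ i, #(β i) ≤ κ) : #(∀ i, β i) ≤ lift.{u} κ := by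
  have := Fintype.ofFinite ι
  calc #(∀ i, β i) = prod fun i ↦ #(β i) := mk_pi β
    _ ≤ prod fun _ : ι ↦ κ := prod_le_prod _ _ hβ
    _ = lift.{u} κ ^ (Fintype.card ι : Cardinal) := by rw [prod_const, mk_fintype, lift_natCast]
    _ ≤ lift.{u} κ := power_nat_le (aleph0_le_lift.mpr hκ)

end Cardinal

theorem Module.Finite.cardinalMk_le {R M : Type u} [Semiring R] [AddCommMonoid M] [Module R M]
    [Module.Finite R M] {κ : Cardinal.{u}} (hκ : ℵ₀ ≤ κ) (hR : #R ≤ κ) : #M ≤ κ := by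
  obtain ⟨n, g, hg⟩ := Module.Finite.exists_fin' R M
  simpa using (mk_le_of_surjective hg).trans (mk_pi_le_of_finite hκ fun _ ↦ hR)

theorem Algebra.FiniteType.cardinalMk_le {A B : Type u} [CommRing A] [CommRing B] [Algebra A B]
    [Algebra.FiniteType A B] {κ : Cardinal.{u}} (hκ : ℵ₀ ≤ κ) (hA : #A ≤ κ) : #B ≤ κ := by
  obtain ⟨n, g, hg⟩ := Algebra.FiniteType.iff_quotient_mvPolynomial''.mp ‹_›
  refine (mk_le_of_surjective hg).trans (MvPolynomial.cardinalMk_le_max_lift.trans ?_)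
  simp only [lift_uzero, mk_fin, lift_natCast]
  exact max_le (max_le hA (natCast_lt_aleph0.le.trans hκ)) hκ

theorem AlgebraicGeometry.Scheme.Hom.cardinalMk_sections_le_of_locallyOfFiniteType
    {X Y : Scheme.{u}} (f : X ⟶ Y) [LocallyOfFiniteType f] {U : Y.Opens} (hU : IsAffineOpen U)
    {V : X.Opens} (hV : IsAffineOpen V) (e : V ≤ f ⁻¹ᵁ U) {κ : Cardinal.{u}} (hκ : ℵ₀ ≤ κ)
    (hY : #Γ(Y, U) ≤ κ) : #Γ(X, V) ≤ κ := by
  let := (f.appLE U V e).hom.toAlgebra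
  have : Algebra.FiniteType Γ(Y, U) Γ(X, V) := f.finiteType_appLE hU hV e
  exact Algebra.FiniteType.cardinalMk_le hκ hY

theorem TopCat.Sheaf.cardinalMk_sections_le_of_isBasis {C : Type*} [Category* C]
    {FC : C → C → Type*} {CC : C → Type u} [∀ X Y, FunLike (FC X Y) (CC X) (CC Y)]
    [ConcreteCategory C FC] [Limits.HasLimitsOfSize.{u, u} C]
    [(CategoryTheory.forget C).ReflectsIsomorphisms]
    [Limits.PreservesLimitsOfSize.{u, u} (CategoryTheory.forget C)]
    {X : TopCat.{u}} (F : X.Sheaf C)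
    {B : Set (Opens X)} (hB : Opens.IsBasis B) {κ : Cardinal.{u}} (hκ : ℵ₀ ≤ κ)
    (hF : ∀ W ∈ B, #(ToType (F.1.obj (op W))) ≤ κ) {U : Opens X} (hU : IsCompact (U : Set X)) :
    #(ToType (F.1.obj (op U))) ≤ κ := by
  obtain ⟨Us, hUsB, hUs, rfl⟩ := hB.exists_finite_of_isCompact hU
  have : Finite Us := hUs
  let restrict (s : ToType (F.1.obj (op (sSup Us)))) (W : Us) : ToType (F.1.obj (op W.1)) :=
    F.1.map (homOfLE (le_sSup W.2)).op s
  have hrestrict : Function.Injective restrict := fun s t h ↦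
    F.eq_of_locally_eq' (fun W : Us ↦ W.1) _ _ (sSup_eq_iSup' Us).le s t (congrFun h)
  simpa using (mk_le_of_injective hrestrict).trans
    (mk_pi_le_of_finite hκ fun W ↦ hF W.1 (hUsB W.2))

/-- Let `k` be a field, `κ` an infinite cardinal with `|k| ≤ κ`, and
`X` a scheme of finite type over `k`. Let `M` be a sheaf of `𝒪_X`-modules such that
for every affine open `W ⊆ X` the `𝒪_X(W)`-module `M(W)` is finitely generated.
Then `|M(U)| ≤ κ` for every open subset `U` of `X`. -/
theorem card_sections_coherent_sheaf_le (k : Type) [Field k]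
    (κ : Cardinal) (hκ : Cardinal.aleph0 ≤ κ) (hk : #k ≤ κ)
    (X : Scheme) (f : X ⟶ Spec (CommRingCat.of k))
    [LocallyOfFiniteType f] [CompactSpace X]
    (M : SheafOfModules.{0}
      ((sheafCompose (Opens.grothendieckTopology X)
        (forget₂ CommRingCat RingCat)).obj X.sheaf))
    (hM : ∀ W : Opens X, IsAffineOpen W →
      Module.Finite (((sheafCompose (Opens.grothendieckTopology X)
        (forget₂ CommRingCat RingCat)).obj X.sheaf).val.obj (op W)) (M.val.obj (op W))) :
    ∀ U : Opens X, #(M.val.obj (op U)) ≤ κ := by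
  intro U
  have : IsLocallyNoetherian X := LocallyOfFiniteType.isLocallyNoetherian f
  have : IsNoetherian X := ⟨⟩
  have hΓ (W : Opens X) (hW : IsAffineOpen W) : #Γ(X, W) ≤ κ :=
    f.cardinalMk_sections_le_of_locallyOfFiniteType (isAffineOpen_top _) hW le_top hκ
      ((mk_congr (Scheme.ΓSpecIso _).commRingCatIsoToRingEquiv.toEquiv).trans_le hk)
  let F : TopCat.Sheaf AddCommGrpCat X := ⟨M.val.presheaf, M.isSheaf⟩
  refine F.cardinalMk_sections_le_of_isBasis X.isBasis_affineOpens hκ (fun W hW ↦ ?_)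
    (NoetherianSpace.isCompact _)
  exact (hM W hW).cardinalMk_le hκ (hΓ W hW)
end

section
/- Let $k$ be a field, let $\kappa$ be an infinite cardinal with $|k| \le \kappa$, let $X$ be a scheme of finite type over $k$, and let $V \subseteq X$ be an open subset. Let $P$ be the presheaf of abelian groups on $X$ defined by $P(U) = \mathcal{O}_X(U)$ if $U \subseteq V$ and $P(U) = 0$ otherwise, with restriction maps those of $\mathcal{O}_X$ when both opens are contained in $V$ and the zero map otherwise. Then the sheafification $aP$ of $P$ satisfies $|aP(U)| \le \kappa$ for every open subset $U$ of $X$. -/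
open CategoryTheory TopologicalSpace AlgebraicGeometry Opposite Cardinal
open scoped Classical

/-- The subgroup of `𝒪_X(U)` which is everything when `U ⊆ V` and zero otherwise. -/
noncomputable def extByZeroSubgroup (X : Scheme) (V : Opens X)
    (U : (Opens X)ᵒᵖ) : AddSubgroup (X.presheaf.obj U) :=
  if (unop U) ≤ V then ⊤ else ⊥

/-- The presheaf of abelian groups `P` on `X` with `P(U) = 𝒪_X(U)` if `U ⊆ V` and
`P(U) = 0` otherwise, with restriction maps those of `𝒪_X` when both opens are
contained in `V` and the zero map otherwise. -/
noncomputable def extByZeroPresheaf (X : Scheme) (V : Opens X) :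
    (Opens X)ᵒᵖ ⥤ AddCommGrpCat where
  obj U := AddCommGrpCat.of (extByZeroSubgroup X V U)
  map {U W} i := AddCommGrpCat.ofHom <|
    ((X.presheaf.map i).hom.toAddMonoidHom.domRestrict (extByZeroSubgroup X V U)).codRestrict
      (extByZeroSubgroup X V W) (by
        intro x
        by_cases hw : (unop W) ≤ V
        · simp only [extByZeroSubgroup, if_pos hw]
          trivial
        · have hu : ¬ (unop U ≤ V) := fun h => hw ((leOfHom i.unop).trans h)
          have hx : (x : X.presheaf.obj U) = 0 := by
            have h2 := x.2
            simp only [extByZeroSubgroup, if_neg hu, AddSubgroup.mem_bot] at h2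
            exact h2
          rw [AddMonoidHom.domRestrict_apply, hx, map_zero]
          simp only [extByZeroSubgroup, if_neg hw, AddMonoidHom.domRestrict_apply, hx,
            AddSubgroup.mem_bot, map_zero])
  map_id U := by
    ext x
    simp only [AddCommGrpCat.hom_ofHom, AddCommGrpCat.hom_id, AddCommGrpCat.hom_comp,
      AddMonoidHom.codRestrict_apply,
      AddMonoidHom.domRestrict_apply, CategoryTheory.Functor.map_id] <;>
    rfl
  map_comp {U W Z} i j := by
    ext x
    simp only [AddCommGrpCat.hom_ofHom, AddCommGrpCat.hom_id, AddCommGrpCat.hom_comp,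
      AddMonoidHom.codRestrict_apply,
      AddMonoidHom.domRestrict_apply, CategoryTheory.Functor.map_comp] <;>
    rfl

/-! `P` is a subpresheaf of the sheaf `𝒪_X`, so its sheafification still injects into `𝒪_X` and it
suffices to bound `|𝒪_X(U)|`. Since `X` is Noetherian, `U` is covered by finitely many affine opens,
and restriction embeds `𝒪_X(U)` into the product of their coordinate rings; each of these is a
finitely generated `k`-algebra, hence has cardinality at most `max |k| ℵ₀`. -/

universe u v

section

variable {C : Type*} [Category* C] {FC : C → C → Type*} {CC : C → Type u}
  [∀ X Y, FunLike (FC X Y) (CC X) (CC Y)] [ConcreteCategory C FC]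
  [Limits.HasLimitsOfSize.{u, u} C] [(CategoryTheory.forget C).ReflectsIsomorphisms]
  [Limits.PreservesLimitsOfSize.{u, u} (CategoryTheory.forget C)]

theorem TopCat.Sheaf.cardinalMk_le_of_isCompact {X : TopCat.{u}} (F : X.Sheaf C)
    {B : Set (Opens X)} (hB : Opens.IsBasis B) {κ : Cardinal.{u}} (hκ : ℵ₀ ≤ κ)
    (hF : ∀ W ∈ B, #(ToType (F.obj.obj (op W))) ≤ κ) {U : Opens X} (hU : IsCompact (U : Set X)) :
    #(ToType (F.obj.obj (op U))) ≤ κ := by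
  obtain ⟨Us, hUsB, hUs, rfl⟩ := hB.exists_finite_of_isCompact hU
  have := hUs.to_subtype
  let restrict (s : ToType (F.obj.obj (op (sSup Us)))) (W : Us) : ToType (F.obj.obj (op W.1)) :=
    F.obj.map (homOfLE (le_sSup W.2)).op s
  have hrestrict : Function.Injective restrict := fun s t h =>
    F.eq_of_locally_eq' (fun W : Us => W.1) _ (fun W => homOfLE (le_sSup W.2))
      (sSup_le fun W hW => le_iSup (fun W : Us => W.1) ⟨W, hW⟩) s t (congrFun h)
  calc #(ToType (F.obj.obj (op (sSup Us))))
      ≤ #(∀ W : Us, ToType (F.obj.obj (op W.1))) := Cardinal.mk_le_of_injective hrestrict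
    _ ≤ κ ^ #Us := by
        rw [Cardinal.mk_pi, ← Cardinal.prod_const']
        exact Cardinal.prod_le_prod _ _ fun W => hF W.1 (hUsB W.2)
    _ ≤ κ := Cardinal.pow_le hκ (Cardinal.lt_aleph0_of_finite Us)

end

theorem Algebra.FiniteType.cardinalMk_le_max (A B : Type u) [CommRing A] [CommRing B]
    [Algebra A B] [Algebra.FiniteType A B] : #B ≤ max #A ℵ₀ := by
  obtain ⟨n, φ, hφ⟩ := Algebra.FiniteType.iff_quotient_mvPolynomial''.mp ‹Algebra.FiniteType A B›
  calc #B ≤ #(MvPolynomial (Fin n) A) := Cardinal.mk_le_of_surjective hφ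
    _ ≤ max #A ℵ₀ := MvPolynomial.cardinalMk_le_max_lift.trans (by
      rw [Cardinal.lift_uzero, Cardinal.mk_fin, Cardinal.lift_natCast, max_assoc,
        max_eq_right Cardinal.natCast_lt_aleph0.le])

namespace AlgebraicGeometry

theorem LocallyOfFiniteType.cardinalMk_sections_le {X Y : Scheme.{u}}
    (f : X ⟶ Y) [LocallyOfFiniteType f] {U : Y.Opens} (hU : IsAffineOpen U) {V : X.Opens}
    (hV : IsAffineOpen V) (e : V ≤ f ⁻¹ᵁ U) : #Γ(X, V) ≤ max #Γ(Y, U) ℵ₀ := by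
  have := f.finiteType_appLE hU hV e
  algebraize [(f.appLE U V e).hom]
  exact Algebra.FiniteType.cardinalMk_le_max _ _

theorem cardinalMk_sections_le_of_locallyOfFiniteType {R : CommRingCat.{u}} [IsNoetherianRing R]
    {X : Scheme.{u}} (f : X ⟶ Spec R) [LocallyOfFiniteType f] [CompactSpace X] (U : X.Opens) :
    #Γ(X, U) ≤ max #R ℵ₀ := by
  have : IsLocallyNoetherian X := LocallyOfFiniteType.isLocallyNoetherian f
  have : IsNoetherian X := ⟨⟩
  have hΓ : #Γ(Spec R, ⊤) = #R :=
    Cardinal.mk_congr (Scheme.ΓSpecIso R).commRingCatIsoToRingEquiv.toEquiv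
  refine X.sheaf.cardinalMk_le_of_isCompact X.isBasis_affineOpens (le_max_right _ _)
    (fun W hW => ?_) (NoetherianSpace.isCompact _)
  exact (LocallyOfFiniteType.cardinalMk_sections_le f (isAffineOpen_top _) hW (by simp)).trans_eq
    (by rw [hΓ])

end AlgebraicGeometry

section

variable {C : Type u} [Category.{v} C] {J : GrothendieckTopology C}
  {D : Type*} [Category* D] {FD : D → D → Type*} {CD : D → Type (max u v)}
  [∀ X Y, FunLike (FD X Y) (CD X) (CD Y)] [ConcreteCategory D FD]
  [HasWeakSheafify J D] [J.HasSheafCompose (CategoryTheory.forget D)]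
  [J.PreservesSheafification (CategoryTheory.forget D)]

theorem sheafifyLift_app_injective {P Q : Cᵒᵖ ⥤ D} (φ : P ⟶ Q) (hQ : Presheaf.IsSheaf J Q)
    (hφ : ∀ X, Function.Injective (φ.app X)) (X : Cᵒᵖ) :
    Function.Injective ((sheafifyLift J φ hQ).app X) := by
  have := Presheaf.isLocallyInjective_of_injective J φ hφ
  have := Presheaf.isLocallyInjective_of_isLocallyInjective_of_isLocallySurjective_fac J φ
    (toSheafify_sheafifyLift J φ hQ)
  exact (Sheaf.isLocallyInjective_iff_injective
    (F₁ := (presheafToSheaf J D).obj P) (F₂ := ⟨Q, hQ⟩) ⟨sheafifyLift J φ hQ⟩).mp this X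

end

namespace extByZeroPresheaf

noncomputable def ι (X : Scheme) (V : Opens X) :
    extByZeroPresheaf X V ⟶
      X.presheaf ⋙ forget₂ CommRingCat RingCat ⋙ forget₂ RingCat AddCommGrpCat where
  app U := AddCommGrpCat.ofHom (extByZeroSubgroup X V U).subtype

theorem ι_app_injective (X : Scheme) (V : Opens X) (U : (Opens X)ᵒᵖ) :
    Function.Injective ((ι X V).app U) :=
  Subtype.val_injective

end extByZeroPresheaf

/-- Let `k` be a field, `κ` an infinite cardinal with `|k| ≤ κ`,
`X` a scheme of finite type over `k`, and `V ⊆ X` open. Let `P` be the presheaf of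
abelian groups on `X` with `P(U) = 𝒪_X(U)` if `U ⊆ V` and `P(U) = 0` otherwise.
Then the sheafification `aP` of `P` (the extension by zero `(i_V)_! 𝒪_V`) satisfies
`|aP(U)| ≤ κ` for every open `U ⊆ X`. -/
theorem card_sections_sheafify_extByZero_le (k : Type) [Field k]
    (κ : Cardinal) (hκ : Cardinal.aleph0 ≤ κ) (hk : #k ≤ κ)
    (X : Scheme) (f : X ⟶ Spec (CommRingCat.of k))
    [LocallyOfFiniteType f] [CompactSpace X] (V : Opens X) :
    ∀ U : Opens X,
      #((CategoryTheory.sheafify (Opens.grothendieckTopology X)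
        (extByZeroPresheaf X V)).obj (op U)) ≤ κ := by
  intro U
  have hO : Presheaf.IsSheaf (Opens.grothendieckTopology X)
      (X.presheaf ⋙ forget₂ CommRingCat RingCat ⋙ forget₂ RingCat AddCommGrpCat) :=
    Presheaf.isSheaf_comp_of_isSheaf _ _ _ X.sheaf.property
  calc #((CategoryTheory.sheafify (Opens.grothendieckTopology X)
        (extByZeroPresheaf X V)).obj (op U))
      ≤ #Γ(X, U) := Cardinal.mk_le_of_injective
        (sheafifyLift_app_injective _ hO (extByZeroPresheaf.ι_app_injective X V) (op U))
    _ ≤ max #k ℵ₀ := cardinalMk_sections_le_of_locallyOfFiniteType f U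
    _ ≤ κ := max_le hk hκ
end

section
/- Let $X$ be a Noetherian topological space, let $\kappa$ be an infinite cardinal such that the set of open subsets of $X$ has cardinality at most $\kappa$, let $J$ be an index set with $|J| \le \kappa$, and let $(F_j)_{j \in J}$ be a family of sheaves of abelian groups on $X$ with $|F_j(U)| \le \kappa$ for all $j \in J$ and all open $U \subseteq X$. Then the coproduct sheaf $\bigoplus_{j \in J} F_j$ in the category of sheaves of abelian groups on $X$ satisfies $|(\bigoplus_{j \in J} F_j)(U)| \le \kappa$ for every open subset $U$ of $X$. -/
/-!
On a Noetherian space every open set is quasi-compact, so a compatible family of sections of the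
objectwise direct sum `U ↦ ⨁ j, F j (U)` has, on a finite subcover, only finitely many nonzero
components; the componentwise gluings therefore vanish outside a finite set of indices and
assemble to a section of the direct sum. Hence the objectwise direct sum is already a sheaf, it is
the coproduct in sheaves, and its sections over `U` form a direct sum of at most `κ` groups of
cardinality at most `κ`.
-/

open CategoryTheory CategoryTheory.Limits TopologicalSpace Cardinal Opposite

instance (X : TopCat.{0}) (J : Type) :
    HasColimitsOfShape (Discrete J) (Sheaf (Opens.grothendieckTopology X) AddCommGrpCat.{0}) :=
  Sheaf.instHasColimitsOfShape

open DirectSum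

universe u

theorem Cardinal.mk_directSum_le {J : Type u} (A : J → Type u) [∀ j, AddCommMonoid (A j)]
    {κ : Cardinal.{u}} (hκ : ℵ₀ ≤ κ) (hJ : #J ≤ κ) (hA : ∀ j, #(A j) ≤ κ) :
    #(⨁ j, A j) ≤ κ := by
  classical
  have hsurj :
      Function.Surjective fun l : List (Σ j, A j) => (l.map fun p => of A p.1 p.2).sum := by
    intro x
    induction x using DirectSum.induction_on with
    | zero => exact ⟨[], rfl⟩
    | of j a => exact ⟨[⟨j, a⟩], by simp⟩
    | add x y hx hy =>
      obtain ⟨l, rfl⟩ := hx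
      obtain ⟨l', rfl⟩ := hy
      exact ⟨l ++ l', by simp⟩
  have hsigma : #(Σ j, A j) ≤ κ :=
    calc #(Σ j, A j) ≤ #J * κ := by
          simpa only [mk_sigma, sum_const'] using sum_le_sum _ (fun _ => κ) hA
      _ ≤ κ * κ := mul_le_mul_left hJ κ
      _ = κ := mul_eq_self hκ
  exact (mk_le_of_surjective hsurj).trans ((mk_list_le_max _).trans (max_le hκ hsigma))

namespace AddCommGrpCat

variable {J : Type u} [DecidableEq J] (A : J → AddCommGrpCat.{u})

def directSumCofan : Cofan A :=
  Cofan.mk (of (⨁ j, A j)) fun j => ofHom (DirectSum.of (fun j => A j) j)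

def isColimitDirectSumCofan : IsColimit (directSumCofan A) :=
  Cofan.IsColimit.mk _ (fun s => ofHom (toAddMonoid fun j => (s.inj j).hom))
    (fun s j => by ext x; exact toAddMonoid_of (fun j => (s.inj j).hom) j x)
    (fun s m hm => by
      ext : 1
      refine DirectSum.addHom_ext' fun j => ?_
      ext x
      exact (ConcreteCategory.congr_hom (hm j) x).trans
        (toAddMonoid_of (fun j => (s.inj j).hom) j x).symm)

end AddCommGrpCat

namespace CategoryTheory.Presheaf

variable {C : Type*} [Category C] {J : Type u} (F : J → Cᵒᵖ ⥤ AddCommGrpCat.{u})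

abbrev directSum : Cᵒᵖ ⥤ AddCommGrpCat.{u} where
  obj U := AddCommGrpCat.of (⨁ j, (F j).obj U)
  map f := AddCommGrpCat.ofHom (DirectSum.map fun j => ((F j).map f).hom)

variable [DecidableEq J]

def directSumCofan : Cofan F :=
  Cofan.mk (directSum F) fun j =>
    { app U := AddCommGrpCat.ofHom (DirectSum.of (fun j => (F j).obj U) j)
      naturality _ _ f := by ext x; simp }

def isColimitDirectSumCofan : IsColimit (directSumCofan F) :=
  evaluationJointlyReflectsColimits _ fun U =>
    (isColimitMapCoconeCofanMkEquiv _ _ _).symm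
      (AddCommGrpCat.isColimitDirectSumCofan fun j => (F j).obj U)

end CategoryTheory.Presheaf

namespace TopCat.Presheaf

section

variable {X : TopCat.{u}} {J : Type u} (F : J → Presheaf AddCommGrpCat.{u} X) {ι : Type*}
  (U : ι → Opens X) (sf : ∀ i, (CategoryTheory.Presheaf.directSum F).obj (op (U i)))

theorem isCompatible_directSum_iff :
    IsCompatible (CategoryTheory.Presheaf.directSum F) U sf ↔
      ∀ j, IsCompatible (F j) U fun i => sf i j :=
  ⟨fun h j i i' => by simpa using congr($(h i i') j),
    fun h i i' => DFinsupp.ext fun j => by simpa using h j i i'⟩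

theorem isGluing_directSum_iff (s : (CategoryTheory.Presheaf.directSum F).obj (op (iSup U))) :
    IsGluing (CategoryTheory.Presheaf.directSum F) U sf s ↔
      ∀ j, IsGluing (F j) U (fun i => sf i j) (s j) :=
  ⟨fun h j i => by simpa using congr($(h i) j),
    fun h i => DFinsupp.ext fun j => by simpa using h j i⟩

end

theorem isSheaf_directSum {X : TopCat.{u}} [NoetherianSpace X] {J : Type u}
    (F : J → CategoryTheory.Sheaf (Opens.grothendieckTopology X) AddCommGrpCat.{u}) :
    IsSheaf (CategoryTheory.Presheaf.directSum fun j => (F j).obj) := by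
  classical
  refine (isSheaf_iff_isSheafUniqueGluing _).2 fun ι U sf hsf => ?_
  rw [isCompatible_directSum_iff] at hsf
  choose g hg hg_uniq using fun j => TopCat.Sheaf.existsUnique_gluing (F j) U _ (hsf j)
  obtain ⟨t, ht⟩ :=
    CompleteLattice.IsCompactElement.exists_finset_of_le_iSup _
      ((Opens.isCompactElement_iff _).2 (NoetherianSpace.isCompact _)) U le_rfl
  let S := t.sup fun i => (sf i).support
  have hg_zero : ∀ j ∉ S, g j = 0 := fun j hj => by
    refine TopCat.Sheaf.eq_of_locally_eq' (F j) (fun i : t => U i) _ (fun i => Opens.leSupr U i)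
      (ht.trans_eq iSup_subtype') _ _ fun i => ?_
    have hsf_zero : sf i j = 0 := DFinsupp.notMem_support_iff.1 fun hj' =>
      hj (Finset.mem_sup.2 ⟨i, i.2, hj'⟩)
    rw [map_zero]
    exact (hg j i).trans hsf_zero
  let s : (CategoryTheory.Presheaf.directSum fun j => (F j).obj).obj (op (iSup U)) :=
    { toFun := g, support' := Trunc.mk ⟨S.val, fun j => (em (j ∈ S)).imp_right (hg_zero j)⟩ }
  exact ⟨s, (isGluing_directSum_iff _ U sf s).2 hg,
    fun s' hs' => DFinsupp.ext fun j => hg_uniq j _ ((isGluing_directSum_iff _ U sf s').1 hs' j)⟩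

end TopCat.Presheaf

namespace CategoryTheory.Sheaf

variable {X : TopCat.{u}} [NoetherianSpace X] {J : Type u} [DecidableEq J]
  (F : J → Sheaf (Opens.grothendieckTopology X) AddCommGrpCat.{u})

def directSumCofan : Cofan F :=
  Cofan.mk ⟨_, TopCat.Presheaf.isSheaf_directSum F⟩ fun j =>
    ObjectProperty.homMk ((Presheaf.directSumCofan fun j => (F j).obj).inj j)

noncomputable def isColimitDirectSumCofan : IsColimit (directSumCofan F) :=
  isColimitOfIsColimitCofanMkObj (sheafToPresheaf _ _) _ _
    (Presheaf.isColimitDirectSumCofan fun j => (F j).obj)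

end CategoryTheory.Sheaf

theorem card_sections_sheaf_coproduct_le_general (X : TopCat) [NoetherianSpace X]
    (κ : Cardinal) (hκ : Cardinal.aleph0 ≤ κ)
    (J : Type) (hJ : #J ≤ κ)
    (F : J → Sheaf (Opens.grothendieckTopology X) AddCommGrpCat)
    (hF : ∀ (j : J) (U : Opens X), #((F j).val.obj (op U)) ≤ κ) :
    ∀ U : Opens X, #((∐ F).val.obj (op U)) ≤ κ := by
  classical
  intro U
  let e : ∐ F ≅ (Sheaf.directSumCofan F).pt :=
    colimit.isoColimitCocone ⟨_, Sheaf.isColimitDirectSumCofan F⟩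
  have hsections : #((∐ F).obj.obj (op U)) = #(⨁ j, (F j).obj.obj (op U)) :=
    mk_congr (((sheafToPresheaf _ _).mapIso e).app (op U)).addCommGroupIsoToAddEquiv.toEquiv
  exact hsections.trans_le (mk_directSum_le _ hκ hJ (hF · U))

/-- Let `X` be a Noetherian topological space, `κ` an infinite
cardinal such that the set of opens of `X` has cardinality at most `κ`, `J` an index
set with `|J| ≤ κ`, and `(F j)_{j ∈ J}` a family of sheaves of abelian groups on `X`
with `|F j (U)| ≤ κ` for all `j` and all opens `U`. Then the coproduct sheaf
`⨁_{j ∈ J} F j` satisfies `|(⨁ F j)(U)| ≤ κ` for every open `U`. -/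
theorem card_sections_sheaf_coproduct_le (X : TopCat) [NoetherianSpace X]
    (κ : Cardinal) (hκ : Cardinal.aleph0 ≤ κ) (hOp : #(Opens X) ≤ κ)
    (J : Type) (hJ : #J ≤ κ)
    (F : J → Sheaf (Opens.grothendieckTopology X) AddCommGrpCat)
    (hF : ∀ (j : J) (U : Opens X), #((F j).val.obj (op U)) ≤ κ) :
    ∀ U : Opens X, #((∐ F).val.obj (op U)) ≤ κ :=
  card_sections_sheaf_coproduct_le_general X κ hκ J hJ F hF
end

section
/- Let $X$ be a Noetherian topological space, let $\kappa$ be an infinite cardinal such that the set of open subsets of $X$ has cardinality at most $\kappa$, and let $N \to M$ be a monomorphism of sheaves of abelian groups on $X$ such that $|M(U)| \le \kappa$ for every open $U \subseteq X$. Then the cokernel sheaf $M/N$ (the cokernel of $N \to M$ in the category of sheaves of abelian groups on $X$) satisfies $|(M/N)(U)| \le \kappa$ for every open subset $U$ of $X$. -/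
/-!
A section `s` of `M/N` over `U` is locally the image of sections of `M`, and since `U` is
compact (every open of a Noetherian space is) finitely many such local lifts `(Vᵢ, mᵢ)` cover `U`.
By the sheaf property this finite list determines `s`, so `|(M/N)(U)|` is bounded by the number of
finite lists of pairs `(V, m)` with `m ∈ M(V)`, which is at most `κ`.
-/

open CategoryTheory CategoryTheory.Limits TopologicalSpace Cardinal Opposite

universe u w

theorem Cardinal.mk_sigma_le_of_le {ι : Type u} {α : ι → Type u} {κ : Cardinal.{u}}
    (hκ : ℵ₀ ≤ κ) (hι : #ι ≤ κ) (hα : ∀ i, #(α i) ≤ κ) : #(Σ i, α i) ≤ κ :=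
  calc #(Σ i, α i) = sum fun i => #(α i) := mk_sigma α
    _ ≤ sum fun _ : ι => κ := sum_le_sum _ _ hα
    _ = #ι * κ := sum_const' ι κ
    _ ≤ κ * κ := by gcongr
    _ = κ := mul_eq_self hκ

namespace TopCat.Presheaf

open CategoryTheory.Presheaf (imageSieve imageSieve_mem localPreimage app_localPreimage)

variable {C : Type*} [Category* C] {FC : C → C → Type*} {CC : C → Type w}
  [∀ X Y, FunLike (FC X Y) (CC X) (CC Y)] [ConcreteCategory C FC] {X : TopCat.{w}}
  {F G : X.Presheaf C}

def IsLiftCover (f : F ⟶ G) {U : Opens X} (s : ToType (G.obj (op U)))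
    (L : List (Σ V : Opens X, ToType (F.obj (op V)))) : Prop :=
  (∀ x ∈ U, ∃ p ∈ L, x ∈ p.1) ∧ ∀ p ∈ L, ∃ g : p.1 ⟶ U, f.app (op p.1) p.2 = G.map g.op s

theorem exists_isLiftCover (f : F ⟶ G)
    [CategoryTheory.Presheaf.IsLocallySurjective (Opens.grothendieckTopology X) f] {U : Opens X}
    (hU : IsCompact (U : Set X)) (s : ToType (G.obj (op U))) : ∃ L, IsLiftCover f s L := by
  have hsurj : ∀ x ∈ U, ∃ (V : Opens X) (ι : V ⟶ U), imageSieve f s ι ∧ x ∈ V :=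
    imageSieve_mem (Opens.grothendieckTopology X) f s
  choose V ι hι hxV using hsurj
  obtain ⟨t, ht⟩ := hU.elim_finite_subcover (fun i : U => (V i.1 i.2 : Set X))
    (fun i => (V i.1 i.2).isOpen) (fun x hx => Set.mem_iUnion.2 ⟨⟨x, hx⟩, hxV x hx⟩)
  refine ⟨t.toList.map fun i => ⟨V i.1 i.2, localPreimage f s (ι i.1 i.2) (hι i.1 i.2)⟩, ?_, ?_⟩
  · intro x hx
    obtain ⟨i, hit, hxi⟩ := Set.mem_iUnion₂.1 (ht hx)
    exact ⟨_, List.mem_map_of_mem (Finset.mem_toList.2 hit), hxi⟩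
  · rintro p hp
    obtain ⟨i, -, rfl⟩ := List.mem_map.1 hp
    exact ⟨ι i.1 i.2, app_localPreimage f s (ι i.1 i.2) (hι i.1 i.2)⟩

end TopCat.Presheaf

namespace TopCat.Sheaf

open Presheaf

variable {C : Type*} [Category* C] {FC : C → C → Type*} {CC : C → Type w}
  [∀ X Y, FunLike (FC X Y) (CC X) (CC Y)] [ConcreteCategory C FC]
  {X : TopCat.{w}} [HasLimitsOfSize.{w, w} C] [(CategoryTheory.forget C).ReflectsIsomorphisms]
  [PreservesLimitsOfSize.{w, w} (CategoryTheory.forget C)] {F : X.Presheaf C} {G : X.Sheaf C}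

theorem eq_of_isLiftCover {f : F ⟶ G.obj} {U : Opens X} {s t : ToType (G.obj.obj (op U))}
    {L : List (Σ V : Opens X, ToType (F.obj (op V)))} (hs : IsLiftCover f s L)
    (ht : IsLiftCover f t L) : s = t := by
  choose ι hι using hs.2
  refine G.eq_of_locally_eq' (fun p : {p // p ∈ L} => p.1.1) U (fun p => ι p.1 p.2) ?_ s t ?_
  · intro x hx
    obtain ⟨p, hp, hxp⟩ := hs.1 x hx
    exact Opens.mem_iSup.2 ⟨⟨p, hp⟩, hxp⟩
  · rintro ⟨p, hp⟩
    obtain ⟨ι', hι'⟩ := ht.2 p hp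
    rw [← hι, Subsingleton.elim (ι p hp) ι', hι']

theorem card_sections_le_of_isLocallySurjective (f : F ⟶ G.obj)
    [CategoryTheory.Presheaf.IsLocallySurjective (Opens.grothendieckTopology X) f]
    {U : Opens X} (hU : IsCompact (U : Set X)) :
    #(ToType (G.obj.obj (op U))) ≤ max ℵ₀ #(Σ V : Opens X, ToType (F.obj (op V))) := by
  choose L hL using exists_isLiftCover f hU
  calc #(ToType (G.obj.obj (op U))) ≤ #(List (Σ V : Opens X, ToType (F.obj (op V)))) :=
        mk_le_of_injective fun s t (hst : L s = L t) => eq_of_isLiftCover (hL s) (hst ▸ hL t)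
    _ ≤ _ := mk_list_le_max _

end TopCat.Sheaf

theorem card_sections_sheaf_cokernel_le_general (X : TopCat) [NoetherianSpace X]
    (κ : Cardinal) (hκ : Cardinal.aleph0 ≤ κ) (hOp : #(Opens X) ≤ κ)
    (N M : Sheaf (Opens.grothendieckTopology X) AddCommGrpCat)
    (φ : N ⟶ M)
    (hM : ∀ U : Opens X, #(M.val.obj (op U)) ≤ κ) :
    ∀ U : Opens X, #((cokernel φ).val.obj (op U)) ≤ κ := by
  intro U
  have : Sheaf.IsLocallySurjective (cokernel.π φ) :=
    (Sheaf.isLocallySurjective_iff_epi' (φ := cokernel.π φ)).2 inferInstance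
  calc #((cokernel φ).obj.obj (op U))
      ≤ max ℵ₀ #(Σ V : Opens X, M.obj.obj (op V)) :=
        TopCat.Sheaf.card_sections_le_of_isLocallySurjective (cokernel.π φ).hom
          (NoetherianSpace.isCompact _)
    _ ≤ κ := max_le hκ (mk_sigma_le_of_le hκ hOp hM)

/-- Let `X` be a Noetherian topological space, `κ` an infinite
cardinal such that the set of opens of `X` has cardinality at most `κ`, and
`φ : N ⟶ M` a monomorphism of sheaves of abelian groups on `X` with `|M(U)| ≤ κ`
for every open `U`. Then the cokernel sheaf `M/N` satisfies `|(M/N)(U)| ≤ κ`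
for every open `U`. -/
theorem card_sections_sheaf_cokernel_le (X : TopCat) [NoetherianSpace X]
    (κ : Cardinal) (hκ : Cardinal.aleph0 ≤ κ) (hOp : #(Opens X) ≤ κ)
    (N M : Sheaf (Opens.grothendieckTopology X) AddCommGrpCat)
    (φ : N ⟶ M) [Mono φ]
    (hM : ∀ U : Opens X, #(M.val.obj (op U)) ≤ κ) :
    ∀ U : Opens X, #((cokernel φ).val.obj (op U)) ≤ κ :=
  card_sections_sheaf_cokernel_le_general X κ hκ hOp N M φ hM
end
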